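/- Let (W,S) be a Coxeter system and let K be a subset of W that admits a unique minimal element u in the Bruhat order. Then, for any two elements σ₁ and σ₂ of W, the set I(σ₁) K I(σ₂) = { a k b : a ≤ σ₁, k ∈ K, b ≤ σ₂ } has a unique minimal element in the Bruhat order, and this element is the unique minimal element of I(σ₁) u I(σ₂) = { a u b : a ≤ σ₁, b ≤ σ₂ } (which exists). -/

import Mathlib

variable {B W : Type*} [Group W] {M : CoxeterMatrix B}

/-- The (strong) Bruhat order on the Coxeter group `W`: `u ≤ v` if and only if some
reduced word for `v` admits a sublist whose product is `u`. -/
def BruhatLE (cs : CoxeterSystem M W) (u v : W) : Prop :=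
  ∃ ω : List B, cs.IsReduced ω ∧ cs.wordProd ω = v ∧
    ∃ ω' : List B, ω'.Sublist ω ∧ cs.wordProd ω' = u

/-- The strict Bruhat order. -/
def BruhatLT (cs : CoxeterSystem M W) (u v : W) : Prop :=
  BruhatLE cs u v ∧ u ≠ v

/-- `m` is the unique minimal element of `K` in the Bruhat order, i.e. `m ∈ K` and
`m` is Bruhat-below every element of `K`. -/
def IsBrMin (cs : CoxeterSystem M W) (K : Set W) (m : W) : Prop :=
  m ∈ K ∧ ∀ x ∈ K, BruhatLE cs m x

/-- `m` is the unique maximal element of `K` in the Bruhat order, i.e. `m ∈ K` and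
`m` is Bruhat-above every element of `K`. -/
def IsBrMax (cs : CoxeterSystem M W) (K : Set W) (m : W) : Prop :=
  m ∈ K ∧ ∀ x ∈ K, BruhatLE cs x m

/-- A standard parabolic subgroup: a subgroup generated by a subset of the simple
reflections. -/
def IsStdParabolic (cs : CoxeterSystem M W) (P : Subgroup W) : Prop :=
  ∃ X : Set B, P = Subgroup.closure (cs.simple '' X)

/-- The left coset `u•W₁ = {u * b : b ∈ W₁}`. -/
def lCoset (W₁ : Subgroup W) (u : W) : Set W := {x | ∃ b ∈ W₁, x = u * b}

/-- The double coset `W₁ u W₂ = {a * u * b : a ∈ W₁, b ∈ W₂}`. -/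
def dblCoset (W₁ W₂ : Subgroup W) (u : W) : Set W :=
  {x | ∃ a ∈ W₁, ∃ b ∈ W₂, x = a * u * b}

/-!
For a simple reflection `s`, the operator `x ↦ min (x, x s)` is monotone for the Bruhat order.
Running these operators along a reduced word of `σ₂`, starting from `u`, yields an element
`u b` with `b ≤ σ₂` lying below `k b'` for every `k ≥ u` and every subword `b'` of that word;
by the subword property these `b'` are exactly the elements below `σ₂`. Inverting treats the
left factor `I(σ₁)` in the same way.

Monotonicity of `x ↦ min (x, x s)`, and of `x ↦ max (x, x s)` which gives the subword property,
is checked on single steps `x < x t` of the chain description of the Bruhat order, where it is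
the lifting property. Both rest on the strong exchange condition, obtained from Tits' action of
`W` on `W × ZMod 2`: its second coordinate counts, modulo 2, the occurrences of a reflection in
the right inversion sequence of a word.
-/

namespace CoxeterSystem

open List

variable (cs : CoxeterSystem M W)

local prefix:100 "s" => cs.simple
local prefix:100 "π" => cs.wordProd
local prefix:100 "ℓ" => cs.length
local prefix:100 "ris " => cs.rightInvSeq

private theorem conj_eq_iff_eq_conj {g t x : W} : g * t * g⁻¹ = x ↔ t = g⁻¹ * x * g := by
  constructor <;> rintro rfl <;> group

theorem simple_mul_mul_simple_eq_iff (i : B) (x y : W) :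
    s i * x * s i = y ↔ x = s i * y * s i := by
  constructor <;> rintro rfl <;> simp only [mul_assoc, simple_mul_simple_cancel_left, mul_one,
    simple_mul_simple_self]

theorem simple_mul_pow_mul_simple (i j : B) (k : ℕ) :
    s i * (s i * s j) ^ k * s i = ((s i * s j) ^ k)⁻¹ := by
  have h : s i * (s i * s j) * (s i)⁻¹ = (s i * s j)⁻¹ := by
    simp only [mul_inv_rev, inv_simple, ← mul_assoc, simple_mul_simple_self, one_mul]
  rw [← inv_pow, ← h, conj_pow, inv_simple]

theorem inv_pow_mul_simple_mul_pow (i j : B) (k n : ℕ) :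
    ((s i * s j) ^ k)⁻¹ * (s i * (s i * s j) ^ n) * (s i * s j) ^ k =
      s i * (s i * s j) ^ (2 * k + n) := by
  rw [← cs.simple_mul_pow_mul_simple]
  simp only [mul_assoc, simple_mul_simple_cancel_left, ← pow_add]
  ring_nf

section parity

open scoped Classical

noncomputable def parityPerm (i : B) : Equiv.Perm (W × ZMod 2) :=
  Function.Involutive.toPerm (fun p ↦ (s i * p.1 * s i, p.2 + if p.1 = s i then 1 else 0)) <| by
    rintro ⟨t, ε⟩
    simp only [simple_mul_mul_simple_eq_iff, simple_mul_simple_cancel_right, add_assoc,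
      CharTwo.add_self_eq_zero, add_zero, Prod.mk.injEq, and_true]

theorem parityPerm_apply (i : B) (t : W) (ε : ZMod 2) :
    cs.parityPerm i (t, ε) = (s i * t * s i, ε + if t = s i then 1 else 0) := rfl

theorem parityPerm_mul_pow_apply (i j : B) (k : ℕ) (t : W) (ε : ZMod 2) :
    ((cs.parityPerm i * cs.parityPerm j) ^ k) (t, ε) =
      ((s i * s j) ^ k * t * ((s i * s j) ^ k)⁻¹,
        ε + ∑ n ∈ Finset.range (2 * k), if t = s i * (s i * s j) ^ (n + 1) then 1 else 0) := by
  induction k with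
  | zero => simp
  | succ k ih =>
    have hstep₁ : (s i * s j) ^ k * t * ((s i * s j) ^ k)⁻¹ = s j ↔
        t = s i * (s i * s j) ^ (2 * k + 1) := by
      have h := cs.inv_pow_mul_simple_mul_pow i j k 1
      rw [pow_one, simple_mul_simple_cancel_left] at h
      rw [conj_eq_iff_eq_conj, h]
    have hstep₂ : s j * ((s i * s j) ^ k * t * ((s i * s j) ^ k)⁻¹) * s j = s i ↔
        t = s i * (s i * s j) ^ (2 * k + 2) := by
      have hjij : s j * s i * s j = s i * (s i * s j) ^ 2 := by
        simp only [sq, ← mul_assoc, simple_mul_simple_self, one_mul]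
      rw [simple_mul_mul_simple_eq_iff, conj_eq_iff_eq_conj, hjij, inv_pow_mul_simple_mul_pow]
    rw [pow_succ', Equiv.Perm.mul_apply, Equiv.Perm.mul_apply, ih, parityPerm_apply,
      parityPerm_apply, hstep₁, hstep₂, show 2 * (k + 1) = 2 * k + 1 + 1 by ring,
      Finset.sum_range_succ, Finset.sum_range_succ]
    ext
    · simp only [pow_succ', mul_inv_rev, inv_simple, mul_assoc]
    · simp only [add_assoc]

theorem isLiftable_parityPerm : M.IsLiftable cs.parityPerm := by
  intro i j
  ext ⟨t, ε⟩ : 1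
  -- the `2 * M i j` terms of the sum run twice through one period
  have hperiodic : ∀ n, (s i * s j) ^ (M i j + n + 1) = (s i * s j) ^ (n + 1) := fun n ↦ by
    rw [add_assoc, pow_add, simple_mul_simple_pow, one_mul]
  rw [parityPerm_mul_pow_apply, simple_mul_simple_pow, two_mul, Finset.sum_range_add]
  simp only [hperiodic, CharTwo.add_self_eq_zero, add_zero, one_mul, mul_one, inv_one,
    Equiv.Perm.one_apply]

noncomputable def parityRep : W →* Equiv.Perm (W × ZMod 2) :=
  cs.lift ⟨cs.parityPerm, cs.isLiftable_parityPerm⟩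

theorem parityRep_wordProd_apply (ω : List B) (t : W) (ε : ZMod 2) :
    cs.parityRep (π ω) (t, ε) = (π ω * t * (π ω)⁻¹, ε + (ris ω).count t) := by
  induction ω with
  | nil => simp
  | cons i ω ih =>
    have hconj : π ω * t * (π ω)⁻¹ = s i ↔ (π ω)⁻¹ * s i * π ω = t := by
      rw [conj_eq_iff_eq_conj, eq_comm]
    rw [wordProd_cons, map_mul, Equiv.Perm.mul_apply, ih, parityRep, lift_apply_simple,
      parityPerm_apply, rightInvSeq, count_cons, hconj]
    ext
    · simp only [mul_inv_rev, inv_simple, mul_assoc]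
    · simp [add_assoc]

noncomputable def reflParity (w t : W) : ZMod 2 := (cs.parityRep w (t, 0)).2

theorem reflParity_wordProd (ω : List B) (t : W) :
    cs.reflParity (π ω) t = (ris ω).count t := by
  rw [reflParity, parityRep_wordProd_apply, zero_add]

theorem parityRep_apply (w t : W) (ε : ZMod 2) :
    cs.parityRep w (t, ε) = (w * t * w⁻¹, ε + cs.reflParity w t) := by
  obtain ⟨ω, -, rfl⟩ := cs.exists_isReduced w
  rw [parityRep_wordProd_apply, reflParity_wordProd]

theorem reflParity_mul (a b t : W) :
    cs.reflParity (a * b) t = cs.reflParity b t + cs.reflParity a (b * t * b⁻¹) := by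
  rw [reflParity, map_mul, Equiv.Perm.mul_apply, parityRep_apply, parityRep_apply, zero_add]

theorem reflParity_one (t : W) : cs.reflParity 1 t = 0 := by
  simpa using cs.reflParity_wordProd [] t

theorem reflParity_simple (i : B) (t : W) :
    cs.reflParity (s i) t = if t = s i then 1 else 0 := by
  rw [← wordProd_singleton, reflParity_wordProd, rightInvSeq_singleton, count_singleton]
  by_cases h : t = s i
  · simp [h]
  · simp [h, Ne.symm h]

theorem reflParity_inv (w t : W) : cs.reflParity w⁻¹ t = cs.reflParity w (w⁻¹ * t * w) := by
  have h := cs.reflParity_mul w w⁻¹ t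
  rw [mul_inv_cancel, reflParity_one, inv_inv, eq_comm, add_eq_zero_iff_eq_neg,
    ZMod.neg_eq_self_mod_two] at h
  exact h

theorem mem_rightInvSeq_of_reflParity_eq_one {ω : List B} {t : W}
    (h : cs.reflParity (π ω) t = 1) : t ∈ ris ω := by
  by_contra hmem
  rw [reflParity_wordProd, count_eq_zero.2 hmem, Nat.cast_zero] at h
  exact zero_ne_one h

theorem reflParity_self {t : W} (ht : cs.IsReflection t) : cs.reflParity t t = 1 := by
  obtain ⟨w, i, rfl⟩ := ht
  rw [mul_assoc w, reflParity_mul, reflParity_mul, reflParity_inv,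
    show w⁻¹ * (w * (s i * w⁻¹)) * w = s i by group,
    show w⁻¹ * (w * (s i * w⁻¹)) * w⁻¹⁻¹ = s i by group,
    show s i * w⁻¹ * (w * (s i * w⁻¹)) * (s i * w⁻¹)⁻¹ = s i by group,
    reflParity_simple, if_pos rfl, add_right_comm, CharTwo.add_self_eq_zero, zero_add]

theorem isRightInversion_of_reflParity_eq_one {w t : W} (h : cs.reflParity w t = 1) :
    cs.IsRightInversion w t := by
  obtain ⟨ω, hω, rfl⟩ := cs.exists_isReduced w
  exact cs.isRightInversion_of_mem_rightInvSeq hω (cs.mem_rightInvSeq_of_reflParity_eq_one h)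

theorem reflParity_eq_one_of_isRightInversion {w t : W} (h : cs.IsRightInversion w t) :
    cs.reflParity w t = 1 := by
  obtain ⟨ht, hlt⟩ := h
  -- otherwise `t` would also be an inversion of `w * t`
  by_contra hne
  have hwt : cs.reflParity (w * t) t = 1 := by
    rw [reflParity_mul, reflParity_self cs ht, mul_inv_cancel_right]
    generalize cs.reflParity w t = x at hne
    revert x
    decide
  have := (cs.isRightInversion_of_reflParity_eq_one hwt).2
  rw [mul_assoc, ht.mul_self, mul_one] at this
  omega

theorem mem_rightInvSeq_of_isRightInversion {ω : List B} {t : W}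
    (h : cs.IsRightInversion (π ω) t) : t ∈ ris ω :=
  cs.mem_rightInvSeq_of_reflParity_eq_one (cs.reflParity_eq_one_of_isRightInversion h)

theorem exists_sublist_wordProd_eq_mul_of_isRightInversion {ω : List B} {t : W}
    (h : cs.IsRightInversion (π ω) t) : ∃ ω', ω' <+ ω ∧ π ω' = π ω * t := by
  obtain ⟨n, hn, rfl⟩ := mem_iff_getElem.1 (cs.mem_rightInvSeq_of_isRightInversion h)
  exact ⟨ω.eraseIdx n, eraseIdx_sublist ω n,
    by rw [← wordProd_mul_getD_rightInvSeq, getD_eq_getElem _ _ hn]⟩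

end parity

section chain

def BruhatStep (x y : W) : Prop := ∃ t, cs.IsReflection t ∧ y = x * t ∧ ℓ x < ℓ y

def ChainLE : W → W → Prop := Relation.ReflTransGen cs.BruhatStep

noncomputable def minMulSimple (x : W) (i : B) : W := if ℓ (x * s i) < ℓ x then x * s i else x

noncomputable def maxMulSimple (x : W) (i : B) : W := if ℓ x < ℓ (x * s i) then x * s i else x

variable {cs}

theorem bruhatStep_mul_simple {x : W} {i : B} (h : ℓ x < ℓ (x * s i)) :
    cs.BruhatStep x (x * s i) :=
  ⟨s i, cs.isReflection_simple i, rfl, h⟩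

theorem bruhatStep_of_mul_simple {x : W} {i : B} (h : ℓ (x * s i) < ℓ x) :
    cs.BruhatStep (x * s i) x :=
  ⟨s i, cs.isReflection_simple i, (simple_mul_simple_cancel_right cs i).symm, h⟩

theorem BruhatStep.length_lt {x y : W} (h : cs.BruhatStep x y) : ℓ x < ℓ y := by
  obtain ⟨_, _, _, h⟩ := h
  exact h

theorem BruhatStep.mul_simple {x y : W} {i : B} (h : cs.BruhatStep x y)
    (hlt : ℓ (x * s i) < ℓ (y * s i)) : cs.BruhatStep (x * s i) (y * s i) := by
  obtain ⟨t, ht, rfl, -⟩ := h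
  refine ⟨s i * t * s i, by simpa [inv_simple] using ht.conj (s i), ?_, hlt⟩
  simp only [mul_assoc, simple_mul_simple_cancel_left]

theorem BruhatStep.eq_mul_simple_or_length_lt {x y : W} {i : B} (h : cs.BruhatStep x y)
    (hy : ℓ (y * s i) < ℓ y) : y = x * s i ∨ ℓ (x * s i) < ℓ (y * s i) := by
  obtain ⟨t, ht, rfl, hlt⟩ := h
  obtain ⟨β, hβ, hβeq⟩ := cs.exists_isReduced (x * t * s i)
  have hinv : cs.IsRightInversion (π (β.concat i)) t := by
    rw [wordProd_concat, ← hβeq, simple_mul_simple_cancel_right]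
    exact ⟨ht, by rwa [mul_assoc, ht.mul_self, mul_one]⟩
  -- `t` is the last reflection `s i` of the inversion sequence of `β ++ [i]`, or an earlier one,
  -- which is `s i * t' * s i` for an inversion `t'` of `y * s i`
  have hmem := cs.mem_rightInvSeq_of_isRightInversion hinv
  rw [rightInvSeq_concat, concat_eq_append, mem_append, mem_map, mem_singleton] at hmem
  rcases hmem with ⟨t', ht', rfl⟩ | rfl
  · right
    have ht'inv := (cs.isRightInversion_of_mem_rightInvSeq hβ ht').2
    rw [← hβeq] at ht'inv
    convert ht'inv using 2
    simp only [MulAut.conj_apply, inv_simple, mul_assoc, simple_mul_simple_cancel_left,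
      (cs.isReflection_of_mem_rightInvSeq β ht').mul_self, mul_one]
  · exact Or.inl rfl

theorem minMulSimple_of_lt {x : W} {i : B} (h : ℓ (x * s i) < ℓ x) :
    cs.minMulSimple x i = x * s i := if_pos h

theorem minMulSimple_of_gt {x : W} {i : B} (h : ℓ x < ℓ (x * s i)) :
    cs.minMulSimple x i = x := if_neg (lt_asymm h)

theorem maxMulSimple_of_gt {x : W} {i : B} (h : ℓ x < ℓ (x * s i)) :
    cs.maxMulSimple x i = x * s i := if_pos h

theorem maxMulSimple_of_lt {x : W} {i : B} (h : ℓ (x * s i) < ℓ x) :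
    cs.maxMulSimple x i = x := if_neg (lt_asymm h)

theorem BruhatStep.minMulSimple {x y : W} (h : cs.BruhatStep x y) (i : B) :
    cs.ChainLE (cs.minMulSimple x i) (cs.minMulSimple y i) := by
  have hxy := h.length_lt
  rcases cs.length_mul_simple x i with hx | hx <;>
    rcases cs.length_mul_simple y i with hy | hy
  · rw [minMulSimple_of_gt (by omega), minMulSimple_of_gt (by omega)]
    exact .single h
  · rw [minMulSimple_of_gt (by omega), minMulSimple_of_lt (by omega)]
    rcases h.eq_mul_simple_or_length_lt (i := i) (by omega) with rfl | hlt
    · rw [simple_mul_simple_cancel_right]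
      exact .refl
    · exact .head (bruhatStep_mul_simple (by omega)) (.single (h.mul_simple hlt))
  · rw [minMulSimple_of_lt (by omega), minMulSimple_of_gt (by omega)]
    exact .head (bruhatStep_of_mul_simple (by omega)) (.single h)
  · rw [minMulSimple_of_lt (by omega), minMulSimple_of_lt (by omega)]
    exact .single (h.mul_simple (by omega))

theorem BruhatStep.maxMulSimple {x y : W} (h : cs.BruhatStep x y) (i : B) :
    cs.ChainLE (cs.maxMulSimple x i) (cs.maxMulSimple y i) := by
  have hxy := h.length_lt
  rcases cs.length_mul_simple x i with hx | hx <;>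
    rcases cs.length_mul_simple y i with hy | hy
  · rw [maxMulSimple_of_gt (by omega), maxMulSimple_of_gt (by omega)]
    exact .single (h.mul_simple (by omega))
  · rw [maxMulSimple_of_gt (by omega), maxMulSimple_of_lt (by omega)]
    rcases h.eq_mul_simple_or_length_lt (i := i) (by omega) with rfl | hlt
    · exact .refl
    · exact .tail (.single (h.mul_simple hlt)) (bruhatStep_of_mul_simple (by omega))
  · rw [maxMulSimple_of_lt (by omega), maxMulSimple_of_gt (by omega)]
    exact .tail (.single h) (bruhatStep_mul_simple (by omega))
  · rw [maxMulSimple_of_lt (by omega), maxMulSimple_of_lt (by omega)]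
    exact .single h

theorem ChainLE.minMulSimple {x y : W} (h : cs.ChainLE x y) (i : B) :
    cs.ChainLE (cs.minMulSimple x i) (cs.minMulSimple y i) :=
  Relation.ReflTransGen.lift' (cs.minMulSimple · i)
    (fun _ _ (hab : cs.BruhatStep _ _) ↦ hab.minMulSimple i) _ _ h

theorem ChainLE.maxMulSimple {x y : W} (h : cs.ChainLE x y) (i : B) :
    cs.ChainLE (cs.maxMulSimple x i) (cs.maxMulSimple y i) :=
  Relation.ReflTransGen.lift' (cs.maxMulSimple · i)
    (fun _ _ (hab : cs.BruhatStep _ _) ↦ hab.maxMulSimple i) _ _ h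

theorem minMulSimple_chainLE (x : W) (i : B) : cs.ChainLE (cs.minMulSimple x i) x := by
  unfold CoxeterSystem.minMulSimple
  split_ifs with h
  exacts [.single (bruhatStep_of_mul_simple h), .refl]

theorem minMulSimple_chainLE_mul_simple (x : W) (i : B) :
    cs.ChainLE (cs.minMulSimple x i) (x * s i) := by
  rcases lt_or_gt_of_ne (cs.length_mul_simple_ne x i) with hx | hx
  · rw [minMulSimple_of_lt hx]
    exact .refl
  · rw [minMulSimple_of_gt hx]
    exact .single (bruhatStep_mul_simple hx)

theorem mul_simple_chainLE_maxMulSimple (x : W) (i : B) :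
    cs.ChainLE (x * s i) (cs.maxMulSimple x i) := by
  rcases lt_or_gt_of_ne (cs.length_mul_simple_ne x i) with hx | hx
  · rw [maxMulSimple_of_lt hx]
    exact .single (bruhatStep_of_mul_simple hx)
  · rw [maxMulSimple_of_gt hx]
    exact .refl

end chain

section subword

variable {cs}

theorem chainLE_of_sublist {ω ω' : List B} (hω : cs.IsReduced ω) (h : ω' <+ ω) :
    cs.ChainLE (π ω') (π ω) := by
  induction ω using List.reverseRecOn generalizing ω' with
  | nil =>
    rw [sublist_nil.1 h]
    exact .refl
  | append_singleton l i ih =>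
    have hl : cs.IsReduced l := by simpa using hω.take l.length
    have hasc : ℓ (π l) < ℓ (π l * s i) := by
      have := hω.eq
      rw [wordProd_append, wordProd_singleton, length_append, length_singleton, ← hl.eq] at this
      omega
    obtain ⟨χ, τ, rfl, hχ, hτ⟩ := sublist_append_iff.1 h
    rcases sublist_singleton.1 hτ with rfl | rfl
    · rw [append_nil, wordProd_append, wordProd_singleton]
      exact (ih hl hχ).tail (bruhatStep_mul_simple hasc)
    · rw [wordProd_append, wordProd_append, wordProd_singleton, ← maxMulSimple_of_gt hasc]
      exact (mul_simple_chainLE_maxMulSimple _ i).trans ((ih hl hχ).maxMulSimple i)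

theorem ChainLE.exists_sublist {x y : W} (h : cs.ChainLE x y) {ω : List B} (hω : π ω = y) :
    ∃ ω', ω' <+ ω ∧ π ω' = x := by
  induction h generalizing ω with
  | refl => exact ⟨ω, .refl ω, hω⟩
  | tail _ hstep ih =>
    obtain ⟨t, ht, rfl, hlt⟩ := hstep
    have hinv : cs.IsRightInversion (π ω) t :=
      ⟨ht, by rwa [hω, mul_assoc, ht.mul_self, mul_one]⟩
    obtain ⟨ω₁, hω₁, hπ⟩ := cs.exists_sublist_wordProd_eq_mul_of_isRightInversion hinv
    obtain ⟨ω', hω', rfl⟩ := ih (by rw [hπ, hω, mul_assoc, ht.mul_self, mul_one])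
    exact ⟨ω', hω'.trans hω₁, rfl⟩

theorem bruhatLE_iff_chainLE {x y : W} : BruhatLE cs x y ↔ cs.ChainLE x y := by
  constructor
  · rintro ⟨ω, hω, rfl, ω', hω', rfl⟩
    exact chainLE_of_sublist hω hω'
  · intro h
    obtain ⟨ω, hω, rfl⟩ := cs.exists_isReduced y
    obtain ⟨ω', hω', rfl⟩ := h.exists_sublist rfl
    exact ⟨ω, hω, rfl, ω', hω', rfl⟩

variable (cs) in
theorem bruhatLE_refl (x : W) : BruhatLE cs x x := bruhatLE_iff_chainLE.2 .refl

theorem _root_.BruhatLE.inv {x y : W} (h : BruhatLE cs x y) : BruhatLE cs x⁻¹ y⁻¹ := by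
  obtain ⟨ω, hω, rfl, ω', hω', rfl⟩ := h
  exact ⟨ω.reverse, hω.reverse, wordProd_reverse .., ω'.reverse, hω'.reverse,
    wordProd_reverse ..⟩

end subword

section minimum

theorem exists_chainLE_min_mul_sublist (u : W) (ω : List B) :
    ∃ m, (∃ ω', ω' <+ ω ∧ m = u * π ω') ∧
      ∀ k, cs.ChainLE u k → ∀ ω', ω' <+ ω → cs.ChainLE m (k * π ω') := by
  induction ω generalizing u with
  | nil =>
    refine ⟨u, ⟨[], .slnil, by simp⟩, fun k hk ω' hω' ↦ ?_⟩
    rw [sublist_nil.1 hω', wordProd_nil, mul_one]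
    exact hk
  | cons i ω ih =>
    obtain ⟨m, ⟨ω', hω', rfl⟩, hmin⟩ := ih (cs.minMulSimple u i)
    refine ⟨cs.minMulSimple u i * π ω', ?_, fun k hk χ hχ ↦ ?_⟩
    · unfold minMulSimple
      split_ifs
      · exact ⟨i :: ω', hω'.cons_cons i, by rw [wordProd_cons, mul_assoc]⟩
      · exact ⟨ω', hω'.cons i, rfl⟩
    · rcases sublist_cons_iff.1 hχ with hχ | ⟨χ, rfl, hχ'⟩
      · exact hmin k ((minMulSimple_chainLE u i).trans hk) χ hχ
      · rw [wordProd_cons, ← mul_assoc]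
        exact hmin _ ((hk.minMulSimple i).trans (minMulSimple_chainLE_mul_simple k i)) χ hχ'

theorem exists_bruhatLE_min_mul (u σ : W) :
    ∃ m, (∃ b, BruhatLE cs b σ ∧ m = u * b) ∧
      ∀ k, BruhatLE cs u k → ∀ b, BruhatLE cs b σ → BruhatLE cs m (k * b) := by
  obtain ⟨ω, hω, rfl⟩ := cs.exists_isReduced σ
  obtain ⟨m, ⟨ω', hω', rfl⟩, hmin⟩ := cs.exists_chainLE_min_mul_sublist u ω
  refine ⟨_, ⟨π ω', ⟨ω, hω, rfl, ω', hω', rfl⟩, rfl⟩, fun k hk b hb ↦ ?_⟩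
  obtain ⟨χ, hχ, rfl⟩ := (bruhatLE_iff_chainLE.1 hb).exists_sublist rfl
  exact bruhatLE_iff_chainLE.2 (hmin k (bruhatLE_iff_chainLE.1 hk) χ hχ)

theorem exists_bruhatLE_min_mul_left (u σ : W) :
    ∃ m, (∃ a, BruhatLE cs a σ ∧ m = a * u) ∧
      ∀ k, BruhatLE cs u k → ∀ a, BruhatLE cs a σ → BruhatLE cs m (a * k) := by
  obtain ⟨m, ⟨b, hb, rfl⟩, hmin⟩ := cs.exists_bruhatLE_min_mul u⁻¹ σ⁻¹
  refine ⟨(u⁻¹ * b)⁻¹, ⟨b⁻¹, by simpa using hb.inv, by group⟩,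
    fun k hk a ha ↦ ?_⟩
  simpa using (hmin k⁻¹ hk.inv a⁻¹ ha.inv).inv

end minimum

end CoxeterSystem

/-- If `K ⊆ W` has a unique Bruhat-minimal element `u`, then for any `σ₁, σ₂ ∈ W` the set
`I(σ₁) K I(σ₂) = {a k b : a ≤ σ₁, k ∈ K, b ≤ σ₂}` has a unique minimal element, and this
element is the unique minimal element of `I(σ₁) u I(σ₂)`. -/
theorem stmt_2 (cs : CoxeterSystem M W) (K : Set W) (u : W) (hK : IsBrMin cs K u)
    (σ₁ σ₂ : W) :
    ∃ m : W,
      IsBrMin cs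
        {x | ∃ a, BruhatLE cs a σ₁ ∧ ∃ k ∈ K, ∃ b, BruhatLE cs b σ₂ ∧ x = a * k * b} m ∧
      IsBrMin cs
        {x | ∃ a, BruhatLE cs a σ₁ ∧ ∃ b, BruhatLE cs b σ₂ ∧ x = a * u * b} m := by
  obtain ⟨m₂, ⟨b, hb, rfl⟩, hm₂⟩ := cs.exists_bruhatLE_min_mul u σ₂
  obtain ⟨m, ⟨a, ha, rfl⟩, hm⟩ := cs.exists_bruhatLE_min_mul_left (u * b) σ₁
  have hmin : ∀ a', BruhatLE cs a' σ₁ → ∀ k, BruhatLE cs u k → ∀ b', BruhatLE cs b' σ₂ →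
      BruhatLE cs (a * (u * b)) (a' * k * b') := fun a' ha' k hk b' hb' ↦ by
    simpa only [mul_assoc] using hm _ (hm₂ k hk b' hb') a' ha'
  refine ⟨a * (u * b), ⟨⟨a, ha, u, hK.1, b, hb, (mul_assoc ..).symm⟩, ?_⟩,
    ⟨a, ha, b, hb, (mul_assoc ..).symm⟩, ?_⟩
  · rintro _ ⟨a', ha', k, hk, b', hb', rfl⟩
    exact hmin a' ha' k (hK.2 k hk) b' hb'
  · rintro _ ⟨a', ha', b', hb', rfl⟩
    exact hmin a' ha' u (cs.bruhatLE_refl u) b' hb'
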